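/- arXiv:0712.1665 — 3 statements merged into one kernel-verified Lean document; each statement's English description precedes it below -/
import Mathlib

section
/- Let q ≥ 3 and define C(q,a) for (a,q)=1 by C(q,a)^{φ(q)} = e^{-γ} ∏_p (1 - 1/p)^{α(p;q,a)} with α(p;q,a) = φ(q)-1 if p ≡ a (mod q) and α(p;q,a) = -1 otherwise (conditionally convergent product over primes in increasing order, C(q,a) > 0). Then ∏_{a mod q, (a,q)=1} C(q,a) = e^{-γ} · q/φ(q). -/
/-!
Multiplying the defining limits over the `φ(q)` reduced residues `a`, each prime `p` occurs in
the combined partial product with exponent `∑_a α(p;q,a)`, which is `0` if `p ∤ q` and `-φ(q)`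
if `p ∣ q`. Hence, as soon as `N > q`, the product of the partial products is the constant
`∏_{p ∣ q} (1 - 1/p)^(-φ(q)) = (q/φ(q))^φ(q)`, and comparing limits gives
`(e^γ ∏_a C(q,a))^φ(q) = (q/φ(q))^φ(q)`; both bases are positive.
-/

open Filter Finset Topology

/-- The exponent `α(p;q,a)`. -/
def mertensExponent (q a p : ℕ) : ℤ :=
  if p % q = a % q then (q.totient : ℤ) - 1 else -1

lemma prod_zpow_eq_zpow_sum {G₀ ι : Type*} [CommGroupWithZero G₀] {x : G₀} (hx : x ≠ 0)
    (s : Finset ι) (f : ι → ℤ) : ∏ i ∈ s, x ^ f i = x ^ ∑ i ∈ s, f i := by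
  classical
  induction s using Finset.induction with
  | empty => simp
  | insert i s hi ih => rw [prod_insert hi, sum_insert hi, zpow_add₀ hx, ih]

lemma card_coprime_range (q : ℕ) : #{a ∈ range q | a.Coprime q} = q.totient := by
  simp_rw [Nat.totient_eq_card_coprime, Nat.coprime_comm]

lemma mod_mem_coprime_range_iff {q : ℕ} (hq : 0 < q) (n : ℕ) :
    n % q ∈ {a ∈ range q | a.Coprime q} ↔ n.Coprime q := by
  simp [Nat.mod_lt _ hq, ZMod.coprime_mod_iff_coprime]

lemma sum_mertensExponent {q : ℕ} (hq : 0 < q) (n : ℕ) :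
    ∑ a ∈ range q with a.Coprime q, mertensExponent q a n =
      if n.Coprime q then 0 else -(q.totient : ℤ) := by
  have hsplit : ∀ a ∈ {a ∈ range q | a.Coprime q},
      mertensExponent q a n = (if n % q = a then (q.totient : ℤ) else 0) - 1 := by
    intro a ha
    rw [mertensExponent, Nat.mod_eq_of_lt (mem_range.1 (mem_filter.1 ha).1)]
    split_ifs <;> ring
  simp only [sum_congr rfl hsplit, sum_sub_distrib, sum_ite_eq, mod_mem_coprime_range_iff hq,
    sum_const, card_coprime_range]
  split_ifs <;> simp

lemma prod_zpow_mertensExponent {q : ℕ} (hq : 0 < q) {x : ℝ} (hx : x ≠ 0) (n : ℕ) :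
    ∏ a ∈ range q with a.Coprime q, x ^ mertensExponent q a n =
      if n.Coprime q then 1 else (x ^ q.totient)⁻¹ := by
  rw [prod_zpow_eq_zpow_sum hx, sum_mertensExponent hq]
  split_ifs <;> simp

lemma prod_primeFactors_one_sub_inv {q : ℕ} (hq : q ≠ 0) :
    ∏ p ∈ q.primeFactors, (1 - 1 / (p : ℝ)) = q.totient / q := by
  have h := congrArg (fun x : ℚ => (x : ℝ)) (Nat.totient_eq_mul_prod_factors q)
  push_cast at h
  rw [h, mul_div_cancel_left₀ _ (Nat.cast_ne_zero.2 hq)]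
  simp

lemma filter_not_coprime_primes_eq_primeFactors {q N : ℕ} (hq : 0 < q) (hN : q < N) :
    {p ∈ range N | p.Prime ∧ ¬ p.Coprime q} = q.primeFactors := by
  ext p
  simp only [mem_filter, mem_range, Nat.mem_primeFactors]
  constructor
  · rintro ⟨-, hp, hpq⟩
    exact ⟨hp, (hp.coprime_iff_not_dvd.not_left).1 hpq, hq.ne'⟩
  · rintro ⟨hp, hpq, -⟩
    exact ⟨(Nat.le_of_dvd hq hpq).trans_lt hN, hp, hp.coprime_iff_not_dvd.not_left.2 hpq⟩

lemma prod_coprime_range_partial_mertens {q N : ℕ} (hq : 0 < q) (hN : q < N) :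
    ∏ a ∈ range q with a.Coprime q, ∏ p ∈ range N with p.Prime,
        (1 - 1 / (p : ℝ)) ^ mertensExponent q a p = ((q : ℝ) / q.totient) ^ q.totient := by
  have hbase : ∀ p : ℕ, p.Prime → 1 - 1 / (p : ℝ) ≠ 0 := fun p hp => by
    have : (1 : ℝ) < p := by exact_mod_cast hp.one_lt
    rw [sub_ne_zero, ne_comm, one_div, inv_ne_one]
    exact this.ne'
  rw [Finset.prod_comm, prod_congr rfl fun p hp =>
    prod_zpow_mertensExponent hq (hbase p (mem_filter.1 hp).2) p, prod_ite, prod_const_one,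
    one_mul, filter_filter, filter_not_coprime_primes_eq_primeFactors hq hN, prod_inv_distrib,
    prod_pow, prod_primeFactors_one_sub_inv hq.ne', ← inv_pow, inv_div]

open Filter Real in
/-- If `C a > 0` satisfies `C(q,a)^φ(q) = e^(-γ) ∏_p (1 - 1/p)^(α(p;q,a))` (the product over
primes taken in increasing order, as a limit of partial products), where
`α(p;q,a) = φ(q) - 1` if `p ≡ a (mod q)` and `α(p;q,a) = -1` otherwise, then
`∏_{a mod q, (a,q)=1} C(q,a) = e^(-γ) q / φ(q)`. -/
theorem prod_mertens_constants {q : ℕ} (hq : 3 ≤ q) (C : ℕ → ℝ)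
    (hpos : ∀ a, Nat.Coprime a q → 0 < C a)
    (hC : ∀ a, Nat.Coprime a q →
      Tendsto (fun N : ℕ => ∏ p ∈ Finset.filter Nat.Prime (Finset.range N),
          (1 - 1 / (p : ℝ)) ^ (if p % q = a % q then (q.totient : ℤ) - 1 else -1))
        atTop (nhds (Real.eulerMascheroniConstant.exp * C a ^ q.totient))) :
    ∏ a ∈ Finset.filter (fun a => Nat.Coprime a q) (Finset.range q), C a
      = Real.exp (-Real.eulerMascheroniConstant) * q / q.totient := by
  have hq0 : 0 < q := by omega
  have hlim := tendsto_finsetProd {a ∈ range q | a.Coprime q}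
    fun a ha => hC a (mem_filter.1 ha).2
  have hconst : Tendsto (fun N : ℕ => ∏ a ∈ range q with a.Coprime q, ∏ p ∈ range N with p.Prime,
      (1 - 1 / (p : ℝ)) ^ mertensExponent q a p) atTop
      (𝓝 (((q : ℝ) / q.totient) ^ q.totient)) :=
    tendsto_const_nhds.congr' <| (eventually_gt_atTop q).mono fun N hN =>
      (prod_coprime_range_partial_mertens hq0 hN).symm
  have hpow := tendsto_nhds_unique hlim hconst
  have hCpos : 0 < ∏ a ∈ range q with a.Coprime q, C a :=
    prod_pos fun a ha => hpos a (mem_filter.1 ha).2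
  rw [prod_mul_distrib, prod_const, card_coprime_range, prod_pow, ← mul_pow,
    pow_left_inj₀ (by positivity) (by positivity) (Nat.totient_pos.2 hq0).ne'] at hpow
  rw [Real.exp_neg, mul_div_assoc, ← hpow, inv_mul_cancel_left₀ (Real.exp_pos _).ne']
end

section
/- Let q₁ | q₂ with q₁ ≥ 3 and (a, q₁) = 1, and let n = q₂/q₁. With C(q,a) defined as the Mertens constant satisfying ∏_{p ≤ x, p ≡ a mod q}(1-1/p) = C(q,a)(log x)^{-1/φ(q)}(1+o(1)), one has C(q₁, a) = ∏_{0 ≤ j < n, (a + j q₁, q₂) = 1} C(q₂, a + j q₁) · ∏_{p | q₂, p ≡ a mod q₁} (1 - 1/p). -/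
/-!
For `x ≥ q₂`, the primes `p ≤ x` with `p ≡ a (mod q₁)` split into the primes in the classes
`a + j q₁ (mod q₂)` that are units mod `q₂`, plus the finitely many primes dividing `q₂`.
These classes form the fibre over `a` of the surjection `(ℤ/q₂)ˣ → (ℤ/q₁)ˣ`, so there are
`φ(q₂)/φ(q₁)` of them and the powers of `log x` on both sides agree; the factorization of the
constants then follows from uniqueness of limits.
-/

open Finset

namespace Nat

theorem exists_lt_add_mul_modEq {q n a b : ℕ} (hn : 0 < n) (hab : a ≡ b [MOD q]) :
    ∃ j < n, a + j * q ≡ b [MOD q * n] := by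
  obtain ⟨k, hk⟩ := Nat.modEq_iff_dvd.1 hab
  have hkn : 0 ≤ k % n := Int.emod_nonneg k (by omega)
  have hkn' : k % n < n := Int.emod_lt_of_pos k (by omega)
  refine ⟨(k % n).toNat, by omega, ?_⟩
  have hj : ((k % n).toNat : ℤ) ≡ k [ZMOD n] := by
    rw [Int.toNat_of_nonneg hkn]; exact Int.mod_modEq k n
  rw [← Int.natCast_modEq_iff]
  calc ((a + (k % n).toNat * q : ℕ) : ℤ) = a + ((k % n).toNat : ℤ) * q := by push_cast; ring
    _ ≡ a + k * q [ZMOD q * n] := by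
      rw [mul_comm (q : ℤ)]; exact (hj.mul_right' (c := (q : ℤ))).add_left _
    _ = b := by linear_combination -hk

theorem eq_of_add_mul_modEq {q n a j j' : ℕ} (hq : q ≠ 0) (hj : j < n) (hj' : j' < n)
    (h : a + j * q ≡ a + j' * q [MOD q * n]) : j = j' := by
  have h' : j ≡ j' [MOD n] :=
    Nat.ModEq.mul_right_cancel' hq (by rw [mul_comm n]; exact Nat.ModEq.add_left_cancel' a h)
  rwa [Nat.ModEq, Nat.mod_eq_of_lt hj, Nat.mod_eq_of_lt hj'] at h'

end Nat

theorem MonoidHom.card_fiber_mul_card_of_surjective {G H : Type*} [Group G] [Group H]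
    [Fintype G] [Fintype H] [DecidableEq H] {f : G →* H} (hf : Function.Surjective f) (h : H) :
    #{g | f g = h} * Fintype.card H = Fintype.card G := by
  have hfib : #{g | f g = h} = Nat.card f.ker := by
    rw [← Nat.card_congr (f.fiberEquivKerOfSurjective hf h), ← Set.ncard_coe_finset]
    congr 1
    ext
    simp
  rw [hfib, ← Nat.card_eq_fintype_card, ← Nat.card_eq_fintype_card, ← f.ker.card_mul_index,
    Subgroup.index_ker, f.range_eq_top.2 hf, Subgroup.card_top]

def coprimeShifts (q n a : ℕ) : Finset ℕ := {j ∈ range n | (a + j * q).Coprime (q * n)}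

theorem card_coprimeShifts_mul_totient {q n a : ℕ} (hq : 0 < q) (hn : 0 < n)
    (ha : a.Coprime q) : #(coprimeShifts q n a) * q.totient = (q * n).totient := by
  have : NeZero q := ⟨hq.ne'⟩
  have : NeZero (q * n) := ⟨(Nat.mul_pos hq hn).ne'⟩
  have hdvd : q ∣ q * n := dvd_mul_right q n
  have hval : ∀ b : ℕ, ((b : ZMod (q * n)).cast : ZMod q) = b := ZMod.cast_natCast hdvd
  rw [← ZMod.card_units_eq_totient, ← ZMod.card_units_eq_totient,
    ← (ZMod.unitsMap hdvd).card_fiber_mul_card_of_surjective (ZMod.unitsMap_surjective hdvd)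
      (ZMod.unitOfCoprime a ha)]
  congr 1
  refine card_bij (fun j hj => ZMod.unitOfCoprime (a + j * q) (mem_filter.1 hj).2) ?_ ?_ ?_
  · intro j _
    simp [Units.ext_iff, ZMod.unitsMap_val, hval]
  · intro j hj j' hj' hjj'
    simp only [coprimeShifts, mem_filter, mem_range] at hj hj'
    rw [Units.ext_iff, ZMod.coe_unitOfCoprime, ZMod.coe_unitOfCoprime,
      ZMod.natCast_eq_natCast_iff] at hjj'
    exact Nat.eq_of_add_mul_modEq hq.ne' hj.1 hj'.1 hjj'
  · intro v hv
    set b := (v : ZMod (q * n)).val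
    have hb : (b : ZMod (q * n)) = v := ZMod.natCast_zmod_val _
    have hab : a ≡ b [MOD q] := by
      rw [mem_filter, Units.ext_iff, ZMod.unitsMap_val, ZMod.coe_unitOfCoprime, ← hb, hval,
        ZMod.natCast_eq_natCast_iff] at hv
      exact hv.2.symm
    obtain ⟨j, hjn, hj⟩ := Nat.exists_lt_add_mul_modEq hn hab
    refine ⟨j, mem_filter.2 ⟨mem_range.2 hjn, hj.gcd_eq.trans (ZMod.val_coe_unit_coprime v)⟩,
      Units.ext ?_⟩
    rw [ZMod.coe_unitOfCoprime, ← hb, ZMod.natCast_eq_natCast_iff]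
    exact hj

def primesModEq (q a N : ℕ) : Finset ℕ := {p ∈ range (N + 1) | p.Prime ∧ p % q = a % q}

theorem primesModEq_eq_biUnion_union {q n a N : ℕ} (hq : 0 < q) (hn : 0 < n) (hN : q * n ≤ N) :
    primesModEq q a N = (coprimeShifts q n a).biUnion (fun j => primesModEq (q * n) (a + j * q) N)
      ∪ {p ∈ (q * n).primeFactors | p % q = a % q} := by
  have hqn : q * n ≠ 0 := (Nat.mul_pos hq hn).ne'
  ext p
  simp only [primesModEq, coprimeShifts, mem_union, mem_biUnion, mem_filter, mem_range,
    Nat.mem_primeFactors]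
  constructor
  · rintro ⟨hpN, hp, hpa⟩
    by_cases hpq : p ∣ q * n
    · exact Or.inr ⟨⟨hp, hpq, hqn⟩, hpa⟩
    · obtain ⟨j, hjn, hj⟩ := Nat.exists_lt_add_mul_modEq hn hpa.symm
      exact Or.inl ⟨j, ⟨hjn, hj.gcd_eq.trans ((Nat.Prime.coprime_iff_not_dvd hp).2 hpq)⟩,
        hpN, hp, hj.symm⟩
  · rintro (⟨j, -, hpN, hp, hpj⟩ | ⟨⟨hp, hpq, -⟩, hpa⟩)
    · exact ⟨hpN, hp, (Nat.ModEq.of_mul_right n hpj).trans (Nat.add_mul_mod_self_right a j q)⟩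
    · exact ⟨Nat.lt_succ_of_le ((Nat.le_of_dvd (by omega) hpq).trans hN), hp, hpa⟩

theorem prod_primesModEq_eq {M : Type*} [CommMonoid M] (f : ℕ → M) {q n a N : ℕ} (hq : 0 < q)
    (hn : 0 < n) (hN : q * n ≤ N) :
    ∏ p ∈ primesModEq q a N, f p =
      (∏ j ∈ coprimeShifts q n a, ∏ p ∈ primesModEq (q * n) (a + j * q) N, f p) *
        ∏ p ∈ {p ∈ (q * n).primeFactors | p % q = a % q}, f p := by
  have hblocks : (coprimeShifts q n a : Set ℕ).PairwiseDisjoint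
      (fun j => primesModEq (q * n) (a + j * q) N) := by
    intro j hj j' hj' hjj'
    refine disjoint_left.2 fun p hpj hpj' => hjj' ?_
    simp only [coe_filter, coprimeShifts, mem_range, Set.mem_ofPred_eq] at hj hj'
    exact Nat.eq_of_add_mul_modEq hq.ne' hj.1 hj'.1
      ((mem_filter.1 hpj).2.2.symm.trans (mem_filter.1 hpj').2.2)
  have hdisj : Disjoint ((coprimeShifts q n a).biUnion
      (fun j => primesModEq (q * n) (a + j * q) N)) {p ∈ (q * n).primeFactors | p % q = a % q} := by
    refine disjoint_left.2 fun p hp hpq => ?_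
    obtain ⟨j, hj, hpj⟩ := mem_biUnion.1 hp
    have hcop : p.Coprime (q * n) :=
      (Nat.ModEq.gcd_eq (mem_filter.1 hpj).2.2).trans (mem_filter.1 hj).2
    have hpq' := (mem_filter.1 hpq).1
    exact (Nat.Prime.coprime_iff_not_dvd (Nat.prime_of_mem_primeFactors hpq')).1 hcop
      (Nat.dvd_of_mem_primeFactors hpq')
  rw [primesModEq_eq_biUnion_union hq hn hN, prod_union hdisj, prod_biUnion hblocks]

theorem Real.rpow_one_div_pow_of_mul_eq {x : ℝ} (hx : 0 ≤ x) {k m n : ℕ} (hn : n ≠ 0)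
    (h : m * k = n) : (x ^ ((1 : ℝ) / n)) ^ m = x ^ ((1 : ℝ) / k) := by
  subst h
  have hm : (m : ℝ) ≠ 0 := by exact_mod_cast left_ne_zero_of_mul hn
  rw [← Real.rpow_natCast, ← Real.rpow_mul hx]
  congr 1
  push_cast
  field_simp

noncomputable def mertensRatio (q a : ℕ) (x : ℝ) : ℝ :=
  (∏ p ∈ primesModEq q a ⌊x⌋₊, (1 - 1 / (p : ℝ))) * Real.log x ^ ((1 : ℝ) / q.totient)

theorem mertensRatio_eq_prod {q n a : ℕ} (hq : 0 < q) (hn : 0 < n) (ha : a.Coprime q) {x : ℝ}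
    (hx : ((q * n : ℕ) : ℝ) ≤ x) :
    mertensRatio q a x = (∏ j ∈ coprimeShifts q n a, mertensRatio (q * n) (a + j * q) x) *
      ∏ p ∈ {p ∈ (q * n).primeFactors | p % q = a % q}, (1 - 1 / (p : ℝ)) := by
  have hqn : 0 < q * n := Nat.mul_pos hq hn
  have hlog : 0 ≤ Real.log x :=
    Real.log_nonneg (le_trans (by exact_mod_cast hqn) hx)
  rw [mertensRatio, prod_primesModEq_eq _ hq hn (Nat.le_floor hx)]
  simp only [mertensRatio, prod_mul_distrib, prod_const,
    Real.rpow_one_div_pow_of_mul_eq hlog (Nat.totient_pos.2 hqn).ne'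
      (card_coprimeShifts_mul_totient hq hn ha)]
  ring

open Filter Real in
/-- Let `C q a` be the Mertens constant for the progression `a mod q`, i.e.
`∏_{p ≤ x, p ≡ a mod q} (1 - 1/p) = C(q,a) (log x)^(-1/φ(q)) (1 + o(1))` as `x → ∞`.
If `q₁ ∣ q₂`, `q₁ ≥ 3`, `(a, q₁) = 1` and `n = q₂/q₁`, then
`C(q₁, a) = ∏_{0 ≤ j < n, (a + j q₁, q₂) = 1} C(q₂, a + j q₁) ·
  ∏_{p | q₂, p ≡ a mod q₁} (1 - 1/p)`. -/
theorem mertens_constant_factorization (C : ℕ → ℕ → ℝ)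
    (hC : ∀ q a : ℕ, 3 ≤ q → Nat.Coprime a q →
      Tendsto (fun x : ℝ =>
          (∏ p ∈ Finset.filter (fun p => Nat.Prime p ∧ p % q = a % q)
              (Finset.range (⌊x⌋₊ + 1)), (1 - 1 / (p : ℝ))) *
            Real.log x ^ ((1 : ℝ) / q.totient))
        atTop (nhds (C q a)))
    {q₁ q₂ a n : ℕ} (hq₁ : 3 ≤ q₁) (hq₂ : 0 < q₂) (hdvd : q₁ ∣ q₂) (ha : Nat.Coprime a q₁)
    (hn : n = q₂ / q₁) :
    C q₁ a = (∏ j ∈ Finset.filter (fun j => Nat.Coprime (a + j * q₁) q₂) (Finset.range n),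
        C q₂ (a + j * q₁)) *
      ∏ p ∈ Finset.filter (fun p => p % q₁ = a % q₁) q₂.primeFactors, (1 - 1 / (p : ℝ)) := by
  obtain ⟨m, rfl⟩ := hdvd
  have hq₁0 : 0 < q₁ := by omega
  obtain rfl : n = m := by rw [hn, Nat.mul_div_cancel_left m hq₁0]
  have hn0 : 0 < n := Nat.pos_of_mul_pos_left hq₂
  have hq₂3 : 3 ≤ q₁ * n := hq₁.trans (Nat.le_mul_of_pos_right q₁ hn0)
  refine tendsto_nhds_unique (hC q₁ a hq₁ ha) ?_
  refine ((tendsto_finsetProd _ fun j hj => hC _ _ hq₂3 (mem_filter.1 hj).2).mul_const _).congr' ?_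
  filter_upwards [eventually_ge_atTop ((q₁ * n : ℕ) : ℝ)] with x hx
  exact (mertensRatio_eq_prod hq₁0 hn0 ha hx).symm
end

section
/- Let q ≥ 3, (a,q) = 1, A > 0 with Aq ≥ 2, and K ≥ 2 an integer. Define E₁ = ∑_{χ mod q, χ ≠ χ₀} χ̄(a) ∑_{1 ≤ m ≤ M} (1/m) ∑_{k > K} (μ(k)/k) log L_{Aq}(χ^k, km) for any M ≥ 1, where L_{Aq}(ψ,s) = ∏_{p > Aq}(1 - ψ(p)p^{-s})^{-1}. Then |E₁| ≤ (φ(q) - 1) · Aq / (K (Aq - 1) ((Aq)^K - 1)). -/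
/-!
Everything is bounded in absolute value, uniformly in the character. Write `x = Aq`. The prime
powers `p ^ j` with `p > x` are distinct integers `> x`, so for `n ≥ 3`
`|log L_x(ψ, n)| ≤ ∑_{i > x} i⁻ⁿ ≤ x⁻ⁿ + x^{1-n}/(n-1) ≤ x^{1-n}`: the first term is the least
integer above `x`, the rest telescopes against `((i-1)^{1-n} - i^{1-n})/(n-1)`. With `|μ(k)/k| ≤ 1/K` and
`1/m ≤ 1`, the sum over `k > K` and `1 ≤ m ≤ M` is then at most
`(x/K) ∑_m x^{-(K+1)m}/(1 - x^{-m}) ≤ x² / (K (x-1) (x^{K+1}-1)) ≤ x / (K (x-1) (x^K-1))`,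
and there are `φ(q) - 1` non-principal characters.
-/

theorem natCast_mul_inv_pow_succ_le_inv_pow_sub {z : ℝ} (hz : 0 < z) (n : ℕ) :
    n * ((z + 1) ^ (n + 1))⁻¹ ≤ (z ^ n)⁻¹ - ((z + 1) ^ n)⁻¹ := by
  have hbern : z ^ n * (1 + n * z⁻¹) ≤ (z + 1) ^ n := by
    calc z ^ n * (1 + n * z⁻¹) ≤ z ^ n * (1 + z⁻¹) ^ n := by
          gcongr; exact one_add_mul_le_pow (by linarith [inv_pos.2 hz]) n
      _ = (z + 1) ^ n := by rw [← mul_pow]; field_simp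
  have hkey : z ^ n * (n + z + 1) ≤ (z + 1) ^ (n + 1) := by
    calc z ^ n * (n + z + 1) ≤ z ^ n * (1 + n * z⁻¹) * (z + 1) := by
          have : 0 ≤ n * z ^ n * z⁻¹ := by positivity
          field_simp
          nlinarith
      _ ≤ (z + 1) ^ (n + 1) := by rw [pow_succ]; gcongr
  rw [le_sub_iff_add_le]
  calc n * ((z + 1) ^ (n + 1))⁻¹ + ((z + 1) ^ n)⁻¹ = (n + z + 1) / (z + 1) ^ (n + 1) := by
        field_simp; ring
    _ ≤ (z ^ n)⁻¹ := by
        rw [div_le_iff₀ (by positivity), ← div_eq_inv_mul, le_div_iff₀ (by positivity)]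
        linarith

theorem mul_tsum_inv_pow_le {y : ℝ} (hy : 0 < y) (n : ℕ) :
    n * ∑' i : ℕ, (((i : ℝ) + 1 + y) ^ (n + 1))⁻¹ ≤ (y ^ n)⁻¹ := by
  rw [← tsum_mul_left]
  refine Real.tsum_le_of_sum_range_le (fun i => by positivity) fun I => ?_
  calc ∑ i ∈ Finset.range I, n * (((i : ℝ) + 1 + y) ^ (n + 1))⁻¹
      ≤ ∑ i ∈ Finset.range I, ((((i : ℝ) + y) ^ n)⁻¹ - ((((i + 1 : ℕ) : ℝ) + y) ^ n)⁻¹) := by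
        gcongr with i
        push_cast
        have h := natCast_mul_inv_pow_succ_le_inv_pow_sub (z := i + y) (by positivity) n
        rwa [add_right_comm] at h
    _ = (y ^ n)⁻¹ - (((I : ℝ) + y) ^ n)⁻¹ := by rw [Finset.sum_range_sub']; simp
    _ ≤ (y ^ n)⁻¹ := sub_le_self _ (by positivity)

theorem summable_inv_pow_nat_add {n : ℕ} (hn : 2 ≤ n) (N : ℕ) :
    Summable fun i : ℕ => (((i + N : ℕ) : ℝ) ^ n)⁻¹ :=
  (summable_nat_add_iff N).mpr (Real.summable_nat_pow_inv.mpr (by omega))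

theorem tsum_inv_pow_nat_add_le {x : ℝ} {N n : ℕ} (hx : 2 ≤ x) (hxN : x < N) (hn : 3 ≤ n) :
    ∑' i : ℕ, (((i + N : ℕ) : ℝ) ^ n)⁻¹ ≤ x / x ^ n := by
  obtain ⟨n, rfl⟩ : ∃ n', n = n' + 1 := ⟨n - 1, by omega⟩
  have hn' : (2 : ℝ) ≤ n := by exact_mod_cast (by omega : 2 ≤ n)
  have hrest := mul_tsum_inv_pow_le (y := N) (by linarith) n
  rw [(summable_inv_pow_nat_add (by omega) N).tsum_eq_zero_add]
  push_cast
  have hfirst : ((0 + N : ℝ) ^ (n + 1))⁻¹ ≤ (x ^ n)⁻¹ * x⁻¹ := by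
    rw [zero_add, ← mul_inv, ← pow_succ]; gcongr
  have hrest' : ∑' i : ℕ, (((i : ℝ) + 1 + N) ^ (n + 1))⁻¹ ≤ (x ^ n)⁻¹ * (n : ℝ)⁻¹ := by
    rw [← div_eq_mul_inv, le_div_iff₀ (by linarith), mul_comm]
    exact hrest.trans (by gcongr)
  calc ((0 + N : ℝ) ^ (n + 1))⁻¹ + ∑' i : ℕ, (((i : ℝ) + 1 + N) ^ (n + 1))⁻¹
      ≤ (x ^ n)⁻¹ * (x⁻¹ + (n : ℝ)⁻¹) := by rw [mul_add]; exact add_le_add hfirst hrest'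
    _ ≤ (x ^ n)⁻¹ * 1 := by
        gcongr
        linarith [inv_anti₀ (by norm_num) hx, inv_anti₀ (by norm_num) hn']
    _ = x / x ^ (n + 1) := by rw [pow_succ]; field_simp

theorem norm_tsum_prime_pow_le_tsum_inv_pow {x : ℝ} {N n : ℕ} (hN : ∀ m : ℕ, x < m → N ≤ m)
    (hn : 2 ≤ n) (c : ℕ → ℂ) (hc : ∀ p, ‖c p‖ ≤ 1) :
    ‖∑' (p : {p : ℕ // p.Prime ∧ x < p}) (j : ℕ+),
        c p ^ (j : ℕ) / ((j : ℕ) * ((p : ℕ) : ℂ) ^ ((j : ℕ) * n))‖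
      ≤ ∑' i : ℕ, (((i + N : ℕ) : ℝ) ^ n)⁻¹ := by
  set S := {p : ℕ // p.Prime ∧ x < p}
  have hpN (p : S) (j : ℕ+) : N ≤ (p : ℕ) ^ (j : ℕ) :=
    (hN p p.2.2).trans (Nat.le_self_pow j.ne_zero _)
  let Φ : S × ℕ+ → ℕ := fun pj => (pj.1 : ℕ) ^ (pj.2 : ℕ) - N
  have hΦ : Function.Injective Φ := by
    rintro ⟨p, j⟩ ⟨p', j'⟩ h
    have hpp := hpN p j
    have hpp' := hpN p' j'
    obtain ⟨h₁, h₂⟩ := p.2.1.pow_inj' p'.2.1 j.ne_zero j'.ne_zero (by simp only [Φ] at h; omega)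
    simp [Subtype.ext h₁, PNat.coe_inj.mp h₂]
  have hg := summable_inv_pow_nat_add hn N
  have hbound (pj : S × ℕ+) :
      ‖c pj.1 ^ (pj.2 : ℕ) / ((pj.2 : ℕ) * ((pj.1 : ℕ) : ℂ) ^ ((pj.2 : ℕ) * n))‖
        ≤ (((Φ pj + N : ℕ) : ℝ) ^ n)⁻¹ := by
    obtain ⟨p, j⟩ := pj
    dsimp only
    rw [Nat.sub_add_cancel (hpN p j), norm_div, norm_mul, norm_pow, norm_pow, Complex.norm_natCast,
      Complex.norm_natCast, Nat.cast_pow, ← pow_mul]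
    have hp : (0 : ℝ) < (p : ℕ) := by exact_mod_cast p.2.1.pos
    calc ‖c p‖ ^ (j : ℕ) / ((j : ℕ) * ((p : ℕ) : ℝ) ^ ((j : ℕ) * n))
        ≤ 1 / (1 * ((p : ℕ) : ℝ) ^ ((j : ℕ) * n)) := by
          gcongr
          · exact pow_le_one₀ (norm_nonneg _) (hc p)
          · exact_mod_cast j.pos
      _ = _ := by rw [one_mul, one_div]
  have hsum := (hg.comp_injective hΦ).of_nonneg_of_le (fun _ => norm_nonneg _) hbound
  rw [← hsum.of_norm.tsum_prod]
  calc _ ≤ ∑' pj : S × ℕ+, (((Φ pj + N : ℕ) : ℝ) ^ n)⁻¹ :=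
        tsum_of_norm_bounded (hg.comp_injective hΦ).hasSum hbound
    _ ≤ _ := tsum_comp_le_tsum_of_inj hg (fun _ => by positivity) hΦ

theorem norm_tsum_prime_pow_le {x : ℝ} (hx : 2 ≤ x) {n : ℕ} (hn : 3 ≤ n) (c : ℕ → ℂ)
    (hc : ∀ p, ‖c p‖ ≤ 1) :
    ‖∑' (p : {p : ℕ // p.Prime ∧ x < p}) (j : ℕ+),
        c p ^ (j : ℕ) / ((j : ℕ) * ((p : ℕ) : ℂ) ^ ((j : ℕ) * n))‖ ≤ x / x ^ n := by
  have hx₀ : 0 ≤ x := by linarith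
  refine (norm_tsum_prime_pow_le_tsum_inv_pow (N := ⌊x⌋₊ + 1) (fun m hm => ?_) (by omega) c
    hc).trans (tsum_inv_pow_nat_add_le hx ?_ hn)
  · exact (Nat.floor_lt hx₀).mpr hm
  · push_cast; exact Nat.lt_floor_add_one x

theorem hasSum_geometric_tail {r : ℝ} (h₀ : 0 ≤ r) (h₁ : r < 1) (K : ℕ) :
    HasSum (fun k : {k : ℕ // K < k} => r ^ (k : ℕ)) (r ^ (K + 1) / (1 - r)) := by
  let e : ℕ ≃ {k : ℕ // K < k} :=
    { toFun i := ⟨i + (K + 1), by omega⟩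
      invFun k := k - (K + 1)
      left_inv i := by simp
      right_inv k := Subtype.ext (by have := k.2; simp; omega) }
  have h : HasSum (fun i : ℕ => r ^ (i + (K + 1))) (r ^ (K + 1) / (1 - r)) := by
    simpa only [pow_add, mul_comm, div_eq_mul_inv] using
      (hasSum_geometric_of_lt_one h₀ h₁).mul_left (r ^ (K + 1))
  exact e.hasSum_iff.mp h

open ArithmeticFunction in
theorem norm_tsum_moebius_div_mul_le {x : ℝ} (hx : 1 < x) {K m : ℕ} (hK : 0 < K) (hm : 0 < m)
    (f : ℕ → ℂ) (hf : ∀ k, K < k → ‖f k‖ ≤ x / x ^ (k * m)) :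
    ‖∑' k : {k : ℕ // K < k}, ((moebius k : ℤ) : ℂ) / (k : ℂ) * f k‖
      ≤ x / K * (x / (x - 1)) * ((x ^ (K + 1))⁻¹) ^ m := by
  set r := (x ^ m)⁻¹
  have hxm : x ≤ x ^ m := le_self_pow₀ hx.le hm.ne'
  have hr₀ : 0 ≤ r := by positivity
  have hrx : r ≤ x⁻¹ := inv_anti₀ (by linarith) hxm
  have hr₁ : r < 1 := hrx.trans_lt (inv_lt_one_of_one_lt₀ hx)
  have hterm (k : {k : ℕ // K < k}) :
      ‖((moebius k : ℤ) : ℂ) / (k : ℂ) * f k‖ ≤ x / K * r ^ (k : ℕ) := by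
    have hk : (K : ℝ) ≤ (k : ℕ) := by exact_mod_cast k.2.le
    rw [norm_mul, norm_div, Complex.norm_intCast, Complex.norm_natCast]
    calc |((moebius k : ℤ) : ℝ)| / (k : ℕ) * ‖f k‖ ≤ 1 / K * (x / x ^ ((k : ℕ) * m)) := by
          gcongr
          · exact_mod_cast abs_moebius_le_one
          · exact hf k k.2
      _ = x / K * r ^ (k : ℕ) := by rw [pow_mul', inv_pow]; ring
  refine (tsum_of_norm_bounded ((hasSum_geometric_tail hr₀ hr₁ K).mul_left (x / K)) hterm).trans ?_
  have hpow : r ^ (K + 1) = ((x ^ (K + 1))⁻¹) ^ m := by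
    rw [inv_pow, inv_pow, ← pow_mul, ← pow_mul, mul_comm]
  have hgeom : 1 / (1 - r) ≤ x / (x - 1) := by
    have : 0 < 1 - x⁻¹ := sub_pos.mpr (inv_lt_one_of_one_lt₀ hx)
    calc 1 / (1 - r) ≤ 1 / (1 - x⁻¹) := by gcongr
      _ = x / (x - 1) := by field_simp
  calc x / K * (r ^ (K + 1) / (1 - r)) = x / K * (1 / (1 - r)) * r ^ (K + 1) := by ring
    _ ≤ x / K * (x / (x - 1)) * r ^ (K + 1) := by gcongr
    _ = _ := by rw [hpow]

open ArithmeticFunction in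
theorem norm_sum_Icc_tsum_moebius_div_mul_le {x : ℝ} (hx : 1 < x) {K : ℕ} (hK : 0 < K) (M : ℕ)
    (F : ℕ → ℕ → ℂ) (hF : ∀ k m, K < k → 0 < m → ‖F k m‖ ≤ x / x ^ (k * m)) :
    ‖∑ m ∈ Finset.Icc 1 M, (1 / (m : ℂ)) *
        ∑' k : {k : ℕ // K < k}, ((moebius k : ℤ) : ℂ) / (k : ℂ) * F k m‖
      ≤ x / (K * (x - 1) * (x ^ K - 1)) := by
  set s := (x ^ (K + 1))⁻¹
  have hs₀ : 0 ≤ s := by positivity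
  have hxK : 1 < x ^ K := one_lt_pow₀ hx hK.ne'
  have hX : 1 < x ^ (K + 1) := one_lt_pow₀ hx (Nat.succ_ne_zero K)
  have hs₁ : s < 1 := inv_lt_one_of_one_lt₀ hX
  have hterm (m : ℕ) (hmM : m ∈ Finset.Icc 1 M) :
      ‖(1 / (m : ℂ)) * ∑' k : {k : ℕ // K < k}, ((moebius k : ℤ) : ℂ) / (k : ℂ) * F k m‖
        ≤ x / K * (x / (x - 1)) * s ^ m := by
    have hm : 0 < m := (Finset.mem_Icc.mp hmM).1
    rw [norm_mul, norm_div, norm_one, Complex.norm_natCast]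
    refine (mul_le_of_le_one_left (norm_nonneg _) ?_).trans
      (norm_tsum_moebius_div_mul_le hx hK hm _ fun k hk => hF k m hk hm)
    exact div_le_one_of_le₀ (by exact_mod_cast hm) (Nat.cast_nonneg m)
  refine (norm_sum_le_of_le _ hterm).trans ?_
  rw [← Finset.mul_sum, ← Finset.Ico_add_one_right_eq_Icc]
  calc x / K * (x / (x - 1)) * ∑ m ∈ Finset.Ico 1 (M + 1), s ^ m
      ≤ x / K * (x / (x - 1)) * (s ^ 1 / (1 - s)) := by
        gcongr
        exact geom_sum_Ico_le_of_lt_one hs₀ hs₁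
    _ = x / (K * (x - 1)) * (x / (x ^ (K + 1) - 1)) := by
        have : x ^ (K + 1) - 1 ≠ 0 := by linarith
        have : x - 1 ≠ 0 := by linarith
        simp only [s]
        field_simp
    _ ≤ x / (K * (x - 1)) * (1 / (x ^ K - 1)) := by
        refine mul_le_mul_of_nonneg_left ?_ (div_nonneg (by linarith) (by positivity))
        rw [div_le_div_iff₀ (by linarith) (by linarith), pow_succ]
        linarith
    _ = x / (K * (x - 1) * (x ^ K - 1)) := by rw [mul_one_div, div_div]

theorem DirichletCharacter.card_subtype_ne_one (q : ℕ) [NeZero q] :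
    (Fintype.card {χ : DirichletCharacter ℂ q // χ ≠ 1} : ℝ) = q.totient - 1 := by
  rw [Fintype.card_subtype_compl, Fintype.card_subtype_eq, ← Nat.card_eq_fintype_card,
    DirichletCharacter.card_eq_totient_of_hasEnoughRootsOfUnity ℂ q,
    Nat.cast_sub (Nat.totient_pos.mpr (Nat.pos_of_neZero q)), Nat.cast_one]

open ArithmeticFunction in
theorem truncation_error_bound_general {q : ℕ} [NeZero q] {a : ℕ} {A : ℝ} (hAq : 2 ≤ A * q)
    {K M : ℕ} (hK : 2 ≤ K)
    (logL : DirichletCharacter ℂ q → ℕ → ℂ)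
    (hlogL : ∀ (ψ : DirichletCharacter ℂ q) (n : ℕ), logL ψ n =
      ∑' (p : {p : ℕ // p.Prime ∧ A * q < (p : ℝ)}) (j : ℕ+),
        ψ ((p : ℕ) : ZMod q) ^ (j : ℕ) / ((j : ℕ) * ((p : ℕ) : ℂ) ^ ((j : ℕ) * n))) :
    ‖∑' χ : {χ : DirichletCharacter ℂ q // χ ≠ 1},
        (starRingEnd ℂ) ((χ : DirichletCharacter ℂ q) ((a : ℕ) : ZMod q)) *
          ∑ m ∈ Finset.Icc 1 M, (1 / (m : ℂ)) *
            ∑' k : {k : ℕ // K < k},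
              ((moebius (k : ℕ) : ℤ) : ℂ) / ((k : ℕ) : ℂ) *
                logL ((χ : DirichletCharacter ℂ q) ^ (k : ℕ)) ((k : ℕ) * m)‖
      ≤ ((q.totient : ℝ) - 1) * (A * q) / (K * (A * q - 1) * ((A * q) ^ K - 1)) := by
  have hlog (ψ : DirichletCharacter ℂ q) (n : ℕ) (hn : 3 ≤ n) : ‖logL ψ n‖ ≤ A * q / (A * q) ^ n :=
    hlogL ψ n ▸ norm_tsum_prime_pow_le hAq hn _ fun p => ψ.norm_le_one _
  have hχ (χ : DirichletCharacter ℂ q) := norm_sum_Icc_tsum_moebius_div_mul_le (by linarith)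
    (by omega : 0 < K) M (fun k m => logL (χ ^ k) (k * m))
    fun k m hk hm => hlog _ _ (by nlinarith)
  rw [tsum_fintype]
  calc _ ≤ ∑ _χ : {χ : DirichletCharacter ℂ q // χ ≠ 1},
        A * q / (K * (A * q - 1) * ((A * q) ^ K - 1)) := by
        refine norm_sum_le_of_le _ fun χ _ => ?_
        rw [norm_mul, RCLike.norm_conj]
        exact (mul_le_of_le_one_left (norm_nonneg _) (χ.1.norm_le_one _)).trans (hχ χ)
    _ = _ := by
        rw [Finset.sum_const, Finset.card_univ, nsmul_eq_mul,
          DirichletCharacter.card_subtype_ne_one, ← mul_div_assoc]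

open ArithmeticFunction in
/-- Tail estimate for the truncation in `k`: with `logL ψ n` the convergent series for
`log L_{Aq}(ψ, n)` (Euler product over primes `p > Aq`), the error term
`E₁ = ∑_{χ ≠ χ₀} χ̄(a) ∑_{1 ≤ m ≤ M} (1/m) ∑_{k > K} (μ(k)/k) logL(χ^k, km)` satisfies
`|E₁| ≤ (φ(q) - 1) Aq / (K (Aq - 1) ((Aq)^K - 1))`. -/
theorem truncation_error_bound {q : ℕ} (hq : 3 ≤ q) [NeZero q] {a : ℕ}
    (ha : Nat.Coprime a q) {A : ℝ} (hA : 0 < A) (hAq : 2 ≤ A * q)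
    {K M : ℕ} (hK : 2 ≤ K) (hM : 1 ≤ M)
    (logL : DirichletCharacter ℂ q → ℕ → ℂ)
    (hlogL : ∀ (ψ : DirichletCharacter ℂ q) (n : ℕ), logL ψ n =
      ∑' (p : {p : ℕ // p.Prime ∧ A * q < (p : ℝ)}) (j : ℕ+),
        ψ ((p : ℕ) : ZMod q) ^ (j : ℕ) / ((j : ℕ) * ((p : ℕ) : ℂ) ^ ((j : ℕ) * n))) :
    ‖∑' χ : {χ : DirichletCharacter ℂ q // χ ≠ 1},
        (starRingEnd ℂ) ((χ : DirichletCharacter ℂ q) ((a : ℕ) : ZMod q)) *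
          ∑ m ∈ Finset.Icc 1 M, (1 / (m : ℂ)) *
            ∑' k : {k : ℕ // K < k},
              ((moebius (k : ℕ) : ℤ) : ℂ) / ((k : ℕ) : ℂ) *
                logL ((χ : DirichletCharacter ℂ q) ^ (k : ℕ)) ((k : ℕ) * m)‖
      ≤ ((q.totient : ℝ) - 1) * (A * q) / (K * (A * q - 1) * ((A * q) ^ K - 1)) :=
  truncation_error_bound_general hAq hK logL hlogL
end
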